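/- The product • on F̂ satisfies: 1•1 = 2c, 1•c = c•1 = d + 2c², 1•d = 2cd, d•1 = 2dc, c•c = dc + cd + 2c³, c•d = d² + 2c²d, d•c = d² + 2dc², d•d = 2dcd, together with the rule (uε₁)•(ε₂v) = u(ε₁•ε₂)v for ε₁, ε₂ ∈ {c,d} and cd-monomials u, v; and e is a two-sided unit. -/

import Mathlib

open scoped TensorProduct

/-- cd-monomials: `false` is the letter `c`, `true` is the letter `d`. -/
abbrev Mon := List Bool

/-- The polynomial algebra `F = ℚ⟨c,d⟩`. -/
abbrev F := MonoidAlgebra ℚ (FreeMonoid Bool)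

noncomputable def mono (w : Mon) : F := MonoidAlgebra.single (FreeMonoid.ofList w) 1

noncomputable def cF : F := mono [false]
noncomputable def dF : F := mono [true]

noncomputable def gLetter : Bool → F
  | false => dF
  | true  => cF * dF

noncomputable def gMon : Mon → F
  | [] => 0
  | a :: t => gLetter a * mono t + mono [a] * gMon t

/-- The derivation `G` with `G c = d`, `G d = cd`. -/
noncomputable def G : F →ₗ[ℚ] F :=
  (Finsupp.lsum ℚ fun w => LinearMap.toSpanSingleton ℚ F (gMon (FreeMonoid.toList w)))
    ∘ₗ (MonoidAlgebra.coeffLinearEquiv ℚ).toLinearMap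

/-- `Psi n` is the cd-index of the Boolean lattice of rank `n+1`. -/
noncomputable def Psi : ℕ → F
  | 0 => 1
  | n+1 => Psi n * cF + G (Psi n)

/-- degree of a cd-monomial (`c` has degree 1, `d` degree 2). -/
def deg (w : Mon) : ℕ := w.length + w.count true

/-- `beta v` : coefficient of `v` in the cd-index of the Boolean lattice of rank `deg v + 1`. -/
noncomputable def beta (w : Mon) : ℚ := (Psi (deg w)).coeff (FreeMonoid.ofList w)
/-- `F̂ = ℚ·e ⊕ F`, with basis indexed by `Option Mon`; `none` is the element `e`. -/
abbrev Fhat := Option Mon →₀ ℚ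

noncomputable def ehat : Fhat := Finsupp.single none 1

/-- the inclusion `F → F̂`. -/
noncomputable def ι : F →ₗ[ℚ] Fhat :=
  (Finsupp.lsum ℚ fun w =>
    LinearMap.toSpanSingleton ℚ Fhat (Finsupp.single (some (FreeMonoid.toList w)) 1))
    ∘ₗ (MonoidAlgebra.coeffLinearEquiv ℚ).toLinearMap

noncomputable def deltaLetter : Bool → F ⊗[ℚ] F
  | false => (2 : ℚ) • ((1 : F) ⊗ₜ (1 : F))
  | true  => (1 : F) ⊗ₜ cF + cF ⊗ₜ (1 : F)

/-- `Δ` on monomials, via `Δ(uv) = Δ(u)v + uΔ(v)`. -/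
noncomputable def deltaMon : Mon → F ⊗[ℚ] F
  | [] => 0
  | a :: t =>
      TensorProduct.map LinearMap.id (LinearMap.mulRight ℚ (mono t)) (deltaLetter a)
        + TensorProduct.map (LinearMap.mulLeft ℚ (mono [a])) LinearMap.id (deltaMon t)

noncomputable def deltaHatB : Option Mon → Fhat ⊗[ℚ] Fhat
  | none => ehat ⊗ₜ ehat
  | some w => TensorProduct.map ι ι (deltaMon w) + ehat ⊗ₜ ι (mono w) + ι (mono w) ⊗ₜ ehat

/-- The coproduct `Δ̂` on `F̂`. -/
noncomputable def deltaHat : Fhat →ₗ[ℚ] Fhat ⊗[ℚ] Fhat :=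
  Finsupp.lsum ℚ fun o => LinearMap.toSpanSingleton ℚ (Fhat ⊗[ℚ] Fhat) (deltaHatB o)

noncomputable def gHatB : Option Mon → Fhat
  | none => ι 1
  | some w => ι (gMon w + mono w * cF)

/-- The map `Ĝ` on `F̂`: `Ĝ e = 1`, `Ĝ u = G u + u c`. -/
noncomputable def gHat : Fhat →ₗ[ℚ] Fhat :=
  Finsupp.lsum ℚ fun o => LinearMap.toSpanSingleton ℚ Fhat (gHatB o)


/-- `Δ` applied to a letter, as a finitely supported function on pairs of monomials:
`Δ(c) = 2 (1⊗1)`, `Δ(d) = 1⊗c + c⊗1`. -/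
noncomputable def dL : Bool → (Mon × Mon) →₀ ℚ
  | false => Finsupp.single ([], []) 2
  | true  => Finsupp.single ([], [false]) 1 + Finsupp.single ([false], []) 1

/-- `Δ` on monomials (coefficients on pairs of monomials), via the derivation rule
`Δ(uv) = Δ(u)v + uΔ(v)`, the bimodule structure being `x(u⊗v)y = xu⊗vy`. -/
noncomputable def dP : Mon → (Mon × Mon) →₀ ℚ
  | [] => 0
  | a :: t =>
      Finsupp.mapDomain (fun p => (p.1, p.2 ++ t)) (dL a)
        + Finsupp.mapDomain (fun p => (a :: p.1, p.2)) (dP t)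

/-- All boolean lists of length at most `n` (a set supporting every cd-monomial
that can occur in `u • v`). -/
def allLists : ℕ → List Mon
  | 0 => [[]]
  | n+1 => [] :: (allLists n).flatMap fun w => [false :: w, true :: w]

/-- The product `•` on `F`, dual to the coproduct `Δ̂` under the monomial basis
identification: the coefficient of a monomial `w` in `u • v` is the coefficient
of `u ⊗ v` in `Δ̂(w)`. -/
noncomputable def bulletDualMon (u v : Mon) : F :=
  ((allLists (u.length + v.length + 1)).map fun w => (dP w) (u, v) • mono w).sum

def lenO : Option Mon → ℕ
  | none => 0
  | some w => w.length

/-- `Δ̂` on basis elements of `F̂` (coefficients on pairs of basis elements). -/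
noncomputable def deltaPair : Option Mon → (Option Mon × Option Mon) →₀ ℚ
  | none => Finsupp.single (none, none) 1
  | some w =>
      Finsupp.mapDomain (fun p => (some p.1, some p.2)) (dP w)
        + Finsupp.single (none, some w) 1 + Finsupp.single (some w, none) 1

/-- The product `•` on basis elements of `F̂`, dual to `Δ̂`. -/
noncomputable def bulletDualB (o p : Option Mon) : Fhat :=
  ((none :: (allLists (lenO o + lenO p + 1)).map some).map
    fun b => (deltaPair b) (o, p) • Finsupp.single b (1 : ℚ)).sum

/-- The bilinear extension of the dual product `•` to `F̂`. -/
noncomputable def bulletDualHat : Fhat →ₗ[ℚ] Fhat →ₗ[ℚ] Fhat :=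
  Finsupp.lsum ℚ fun o => LinearMap.toSpanSingleton ℚ (Fhat →ₗ[ℚ] Fhat)
    (Finsupp.lsum ℚ fun p => LinearMap.toSpanSingleton ℚ Fhat (bulletDualB o p))


section Aux

lemma mem_allLists {w : Mon} {n : ℕ} : w ∈ allLists n ↔ w.length ≤ n := by
  induction n generalizing w with
  | zero => simp [allLists, List.length_eq_zero_iff]
  | succ n ih =>
    cases w with
    | nil => simp [allLists]
    | cons a t => cases a <;> simp [allLists, ih, Nat.succ_le_succ_iff]

lemma nodup_allLists (n : ℕ) : (allLists n).Nodup := by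
  induction n with
  | zero => simp [allLists]
  | succ n ih =>
    rw [allLists, List.nodup_cons, List.nodup_flatMap]
    refine ⟨by simp, fun x hx => by simp, ?_⟩
    refine ih.pairwise_of_forall_ne fun x _ y _ hxy => ?_
    intro z hz hz'
    simp only [Function.onFun, List.mem_cons, List.not_mem_nil, or_false] at hz hz'
    rcases hz with h1 | h1 <;> rcases hz' with h2 | h2 <;> subst h1 <;> simp_all

lemma sum_map_ite {α M : Type*} [DecidableEq α] [AddCommMonoid M]
    (L : List α) (hL : L.Nodup) (a : α) (g : α → M) :
    (L.map fun w => if w = a then g w else 0).sum = if a ∈ L then g a else 0 := by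
  induction L with
  | nil => simp
  | cons b L ih =>
    rw [List.nodup_cons] at hL
    rw [List.map_cons, List.sum_cons, ih hL.2]
    by_cases hba : b = a
    · subst hba
      simp [hL.1]
    · simp [hba, Ne.symm hba, List.mem_cons]

lemma sum_map_add {α M : Type*} [AddCommMonoid M] (L : List α) (f g : α → M) :
    (L.map fun x => f x + g x).sum = (L.map f).sum + (L.map g).sum := by
  induction L with
  | nil => simp
  | cons b L ih => simp [ih]; abel

def endC : Mon → Option Mon
  | [] => none
  | [false] => some []
  | [true] => none
  | a :: b :: t => (endC (b :: t)).map (a :: ·)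

lemma endC_cons (a b : Bool) (t : Mon) :
    endC (a :: b :: t) = (endC (b :: t)).map (a :: ·) := by simp [endC]

lemma endC_append_singleton (u : Mon) (e : Bool) :
    endC (u ++ [e]) = if e then none else some u := by
  induction u with
  | nil => cases e <;> rfl
  | cons a t ih =>
    rw [List.cons_append]
    have h : endC (a :: (t ++ [e])) = (endC (t ++ [e])).map (a :: ·) := by
      cases t with
      | nil => simp only [List.nil_append]; exact endC_cons a e []
      | cons b t' => exact endC_cons a b (t' ++ [e])
    rw [h, ih]; cases e <;> simp

lemma endC_some : ∀ {u u' : Mon}, endC u = some u' → u = u' ++ [false] := by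
  intro u
  induction u with
  | nil => simp [endC]
  | cons a t ih =>
    cases t with
    | nil =>
      cases a <;> intro u' h <;> simp [endC] at h
      simp [← h]
    | cons b t' =>
      intro u' h
      rw [endC_cons] at h
      rcases Option.map_eq_some_iff.1 h with ⟨r, hr, hru⟩
      rw [← hru, ih hr]; rfl

def bc2 : Mon → Mon → Mon → ℚ
  | u, false :: v', w => if w = u ++ true :: v' then 1 else 0
  | _, _, _ => 0

def bc3 (v w : Mon) : Option Mon → ℚ
  | some u' => if w = u' ++ true :: v then 1 else 0
  | none => 0

def bc (u v w : Mon) : ℚ :=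
  (if w = u ++ false :: v then 2 else 0) + bc2 u v w + bc3 v w (endC u)

lemma cons_inj' (a : Bool) : Function.Injective (fun p : Mon × Mon => (a :: p.1, p.2)) := by
  intro p q h
  simpa [Prod.ext_iff] using h

lemma dP_apply (w : Mon) : ∀ u v : Mon, dP w (u, v) = bc u v w := by
  induction w with
  | nil =>
    intro u v
    simp only [dP, Finsupp.coe_zero, Pi.zero_apply, bc]
    rcases hE : endC u with _ | u' <;> rcases v with _ | ⟨(_|_), v'⟩ <;>
      simp [bc2, bc3]
  | cons a t ih =>
    intro u v
    rw [dP, Finsupp.add_apply]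
    cases u with
    | nil =>
      have h2 : (Finsupp.mapDomain (fun p : Mon × Mon => (a :: p.1, p.2)) (dP t)) ([], v) = 0 := by
        rw [Finsupp.mapDomain_notin_range]
        rintro ⟨p, hp⟩
        simp [Prod.ext_iff] at hp
      rw [h2, add_zero]
      cases a <;>
        simp only [dL, Finsupp.mapDomain_add, Finsupp.mapDomain_single, Finsupp.add_apply,
          Finsupp.single_apply, bc, endC, bc3] <;>
        rcases v with _ | ⟨(_|_), v'⟩ <;>
        simp [bc2, Prod.ext_iff, eq_comm]
    | cons b u' =>
      rcases eq_or_ne b a with hb | hb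
      · subst hb
        have h2 : (Finsupp.mapDomain (fun p : Mon × Mon => (b :: p.1, p.2)) (dP t)) (b :: u', v)
            = dP t (u', v) := Finsupp.mapDomain_apply (cons_inj' b) (dP t) (u', v)
        rw [h2, ih u' v]
        have hE3 : bc3 v (b :: t) (endC (b :: u')) = bc3 v t (endC u') := by
          cases u' with
          | nil => cases b <;> simp [endC, bc3]
          | cons c u'' =>
            rw [endC_cons]
            rcases hE : endC (c :: u'') with _ | r <;> simp [bc3, List.cons_append]
        simp only [bc, hE3]
        cases b <;>
          simp only [dL, Finsupp.mapDomain_add, Finsupp.mapDomain_single, Finsupp.add_apply,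
            Finsupp.single_apply, Prod.ext_iff] <;>
          rcases v with _ | ⟨(_|_), v'⟩ <;>
          simp [bc2, List.cons_append, eq_comm]
      · have h2 : (Finsupp.mapDomain (fun p : Mon × Mon => (a :: p.1, p.2)) (dP t)) (b :: u', v)
            = 0 := by
          rw [Finsupp.mapDomain_notin_range]
          rintro ⟨p, hp⟩
          simp [Prod.ext_iff] at hp
          exact hb hp.1.1.symm
        rw [h2, add_zero]
        cases a <;> cases b <;> (try exact absurd rfl hb)
        · -- a = false, b = true
          have hE3 : bc3 v (false :: t) (endC (true :: u')) = 0 := by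
            cases u' with
            | nil => simp [endC, bc3]
            | cons c u'' =>
              rw [endC_cons]
              rcases hE : endC (c :: u'') with _ | r <;> simp [bc3, List.cons_append]
          simp only [bc, hE3, add_zero]
          simp only [dL, Finsupp.mapDomain_single, Finsupp.single_apply, Prod.ext_iff]
          rcases v with _ | ⟨(_|_), v'⟩ <;> simp [bc2, List.cons_append]
        · -- a = true, b = false
          simp only [bc, dL, Finsupp.mapDomain_add, Finsupp.mapDomain_single, Finsupp.add_apply,
            Finsupp.single_apply, Prod.ext_iff]
          cases u' with
          | nil =>
            simp only [endC, bc3]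
            rcases v with _ | ⟨(_|_), v'⟩ <;> simp [bc2, List.cons_append, eq_comm]
          | cons c u'' =>
            have hE3 : bc3 v (true :: t) (endC (false :: c :: u'')) = 0 := by
              rw [endC_cons]
              rcases hE : endC (c :: u'') with _ | r <;> simp [bc3, List.cons_append]
            rw [hE3]
            rcases v with _ | ⟨(_|_), v'⟩ <;> simp [bc2, List.cons_append]

lemma mono_mul (a b : Mon) : mono a * mono b = mono (a ++ b) := by
  rw [mono, mono, mono, MonoidAlgebra.single_mul_single, one_mul]
  rfl

lemma sum_pick {n : ℕ} (a : Mon) (ha : a.length ≤ n) (c : ℚ) :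
    ((allLists n).map fun w => (if w = a then c else 0) • mono w).sum = c • mono a := by
  have h : ∀ w : Mon, (if w = a then c else 0) • mono w
      = if w = a then c • mono w else 0 := by
    intro w; split <;> simp
  rw [funext h, sum_map_ite _ (nodup_allLists n) a, if_pos (mem_allLists.2 ha)]

lemma bullet_closed_form (u v : Mon) :
    bulletDualMon u v =
      (2 : ℚ) • mono (u ++ false :: v)
      + (match v with | false :: v' => mono (u ++ true :: v') | _ => 0)
      + (match endC u with | some u' => mono (u' ++ true :: v) | none => 0) := by
  rw [bulletDualMon]
  have hfe : ∀ w : Mon, dP w (u, v) • mono w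
      = (if w = u ++ false :: v then (2:ℚ) else 0) • mono w
        + bc2 u v w • mono w + bc3 v w (endC u) • mono w := by
    intro w
    rw [dP_apply, bc, add_smul, add_smul]
  rw [funext hfe]
  rw [sum_map_add _ (fun w => (if w = u ++ false :: v then (2:ℚ) else 0) • mono w
        + bc2 u v w • mono w) (fun w => bc3 v w (endC u) • mono w),
      sum_map_add _ (fun w => (if w = u ++ false :: v then (2:ℚ) else 0) • mono w)
        (fun w => bc2 u v w • mono w)]
  congr 1
  · congr 1
    · exact sum_pick _ (by simp only [List.length_append, List.length_cons]; omega) 2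
    · rcases v with _ | ⟨(_|_), v'⟩
      · simp [bc2]
      · rw [show (fun w => bc2 u (false :: v') w • mono w)
            = fun w => (if w = u ++ true :: v' then (1:ℚ) else 0) • mono w from rfl]
        rw [sum_pick _ (by simp only [List.length_append, List.length_cons]; omega) 1, one_smul]
      · simp [bc2]
  · rcases hE : endC u with _ | u'
    · simp [bc3]
    · have hu : u = u' ++ [false] := endC_some hE
      rw [show (fun w => bc3 v w (some u') • mono w)
          = fun w => (if w = u' ++ true :: v then (1:ℚ) else 0) • mono w from rfl]
      rw [sum_pick _ (by subst hu; simp only [List.length_append, List.length_cons]; omega) 1,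
        one_smul]

lemma nodup_optList (n : ℕ) : (none :: (allLists n).map some : List (Option Mon)).Nodup := by
  rw [List.nodup_cons]
  exact ⟨by simp, (nodup_allLists n).map (Option.some_injective _)⟩

lemma bulletDualB_none_left (o : Option Mon) : bulletDualB none o = Finsupp.single o 1 := by
  rw [bulletDualB]
  have hfe : ∀ b : Option Mon, (deltaPair b) (none, o) • Finsupp.single b (1:ℚ)
      = if b = o then Finsupp.single b (1:ℚ) else 0 := by
    intro b
    cases b with
    | none =>
      rw [deltaPair, Finsupp.single_apply]
      rcases o with _ | w <;> simp
    | some w =>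
      rw [deltaPair, Finsupp.add_apply, Finsupp.add_apply, Finsupp.single_apply,
        Finsupp.single_apply, Finsupp.mapDomain_notin_range]
      · rcases o with _ | w' <;> simp [eq_comm]
      · rintro ⟨p, hp⟩
        simp [Prod.ext_iff] at hp
  rw [funext hfe, sum_map_ite _ (nodup_optList _) o, if_pos]
  rcases o with _ | w
  · simp
  · simp only [List.mem_cons, List.mem_map]
    exact Or.inr ⟨w, mem_allLists.2 (by simp [lenO]), rfl⟩

lemma bulletDualB_none_right (o : Option Mon) : bulletDualB o none = Finsupp.single o 1 := by
  rw [bulletDualB]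
  have hfe : ∀ b : Option Mon, (deltaPair b) (o, none) • Finsupp.single b (1:ℚ)
      = if b = o then Finsupp.single b (1:ℚ) else 0 := by
    intro b
    cases b with
    | none =>
      rw [deltaPair, Finsupp.single_apply]
      rcases o with _ | w <;> simp
    | some w =>
      rw [deltaPair, Finsupp.add_apply, Finsupp.add_apply, Finsupp.single_apply,
        Finsupp.single_apply, Finsupp.mapDomain_notin_range]
      · rcases o with _ | w' <;> simp [eq_comm]
      · rintro ⟨p, hp⟩
        simp [Prod.ext_iff] at hp
  rw [funext hfe, sum_map_ite _ (nodup_optList _) o, if_pos]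
  rcases o with _ | w
  · simp
  · simp only [List.mem_cons, List.mem_map]
    exact Or.inr ⟨w, mem_allLists.2 (by simp [lenO]), rfl⟩

end Aux

/-- The product `•` on `F̂` satisfies `1•1 = 2c`,
`1•c = c•1 = d + 2c²`, `1•d = 2cd`, `d•1 = 2dc`, `c•c = dc + cd + 2c³`,
`c•d = d² + 2c²d`, `d•c = d² + 2dc²`, `d•d = 2dcd`, together with the rule
`(uε₁)•(ε₂v) = u(ε₁•ε₂)v` for letters `ε₁, ε₂` and cd-monomials `u, v`; and `e`
is a two-sided unit. -/
theorem bullet_formulas :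
    bulletDualMon [] [] = (2 : ℚ) • cF
    ∧ bulletDualMon [] [false] = dF + (2 : ℚ) • (cF * cF)
    ∧ bulletDualMon [false] [] = dF + (2 : ℚ) • (cF * cF)
    ∧ bulletDualMon [] [true] = (2 : ℚ) • (cF * dF)
    ∧ bulletDualMon [true] [] = (2 : ℚ) • (dF * cF)
    ∧ bulletDualMon [false] [false] = dF * cF + cF * dF + (2 : ℚ) • (cF * cF * cF)
    ∧ bulletDualMon [false] [true] = dF * dF + (2 : ℚ) • (cF * cF * dF)
    ∧ bulletDualMon [true] [false] = dF * dF + (2 : ℚ) • (dF * cF * cF)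
    ∧ bulletDualMon [true] [true] = (2 : ℚ) • (dF * cF * dF)
    ∧ (∀ (u v : Mon) (e1 e2 : Bool),
        bulletDualMon (u ++ [e1]) (e2 :: v) = mono u * bulletDualMon [e1] [e2] * mono v)
    ∧ (∀ x : Fhat, bulletDualHat ehat x = x ∧ bulletDualHat x ehat = x) := by
  refine ⟨?_, ?_, ?_, ?_, ?_, ?_, ?_, ?_, ?_, ?_, ?_⟩
  · rw [bullet_closed_form]; simp [endC, cF]
  · rw [bullet_closed_form]; simp [endC, cF, dF, mono_mul]; abel
  · rw [bullet_closed_form]; simp [endC, cF, dF, mono_mul]; abel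
  · rw [bullet_closed_form]; simp [endC, cF, dF, mono_mul]
  · rw [bullet_closed_form]; simp [endC, cF, dF, mono_mul]
  · rw [bullet_closed_form]; simp [endC, cF, dF, mono_mul]; abel
  · rw [bullet_closed_form]; simp [endC, cF, dF, mono_mul]; abel
  · rw [bullet_closed_form]; simp [endC, cF, dF, mono_mul]; abel
  · rw [bullet_closed_form]; simp [endC, cF, dF, mono_mul]
  · intro u v e1 e2
    rcases e1 <;> rcases e2 <;>
      rw [bullet_closed_form, bullet_closed_form] <;>
      simp [endC_append_singleton, endC, mono_mul, mul_add, add_mul, smul_mul_assoc,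
        mul_smul_comm, List.append_assoc, List.cons_append] <;> try abel
  · intro x
    constructor
    · have h1 : bulletDualHat ehat = LinearMap.id := by
        rw [ehat, bulletDualHat, Finsupp.lsum_single, LinearMap.toSpanSingleton_apply_one]
        apply Finsupp.lhom_ext
        intro p b
        rw [Finsupp.lsum_single, LinearMap.toSpanSingleton_apply, bulletDualB_none_left,
          Finsupp.smul_single, smul_eq_mul, mul_one, LinearMap.id_apply]
      rw [h1, LinearMap.id_apply]
    · induction x using Finsupp.induction_linear with
      | zero => simp
      | add a b ha hb => simp [ha, hb]
      | single o b =>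
        rw [bulletDualHat, Finsupp.lsum_single, LinearMap.toSpanSingleton_apply,
          LinearMap.smul_apply, ehat, Finsupp.lsum_single, LinearMap.toSpanSingleton_apply_one,
          bulletDualB_none_right, Finsupp.smul_single, smul_eq_mul, mul_one]
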